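/- arXiv:2401.13902 — 2 statements merged into one kernel-verified Lean document; each statement's English description precedes it below -/
import Mathlib

section
/- Let α be an element of an algebraically closed field of characteristic ≠ 2 with α ≠ 0 and α ≠ 1. Then the singular locus of the reducible quartic F = (yz + x²)·(α·yz + x²) consists of exactly the two points (0:1:0) and (0:0:1). -/
/-- For α ≠ 0, 1 in an algebraically closed field of characteristic ≠ 2, the
singular locus of F = (yz + x²)(αyz + x²) consists exactly of (0:1:0) and
(0:0:1).  With A = yz+x², B = αyz+x²:
∂F/∂x = 2x(A+B), ∂F/∂y = zB + αzA, ∂F/∂z = yB + αyA. -/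
theorem quartic_rA3sq_singular_locus
    (K : Type*) [Field K] [IsAlgClosed K] (h2 : (2 : K) ≠ 0)
    (α : K) (hα0 : α ≠ 0) (hα1 : α ≠ 1)
    (a b c : K) (h : (a, b, c) ≠ (0, 0, 0)) :
    (2 * a * ((b * c + a ^ 2) + (α * b * c + a ^ 2)) = 0 ∧
     c * (α * b * c + a ^ 2) + α * c * (b * c + a ^ 2) = 0 ∧
     b * (α * b * c + a ^ 2) + α * b * (b * c + a ^ 2) = 0) ↔
    ∃ t : K, t ≠ 0 ∧ ((a, b, c) = (0, t, 0) ∨ (a, b, c) = (0, 0, t)) := by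
  have h2α : (2 : K) * α ≠ 0 := mul_ne_zero h2 hα0
  constructor
  · rintro ⟨e1, e2, e3⟩
    have hDc : c * ((1 + α) * a ^ 2 + 2 * α * (b * c)) = 0 := by linear_combination e2
    have hDb : b * ((1 + α) * a ^ 2 + 2 * α * (b * c)) = 0 := by linear_combination e3
    by_cases ha : a = 0
    · subst ha
      by_cases hc : c = 0
      · subst hc
        have hb : b ≠ 0 := by
          intro hb; exact h (by simp [hb])
        exact ⟨b, hb, Or.inl (by simp)⟩
      · have hb : b = 0 := by
          rcases mul_eq_zero.mp hDc with h' | h'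
          · exact absurd h' hc
          · have : 2 * α * (b * c) = 0 := by linear_combination h'
            rcases mul_eq_zero.mp this with h'' | h''
            · exact absurd h'' h2α
            · exact (mul_eq_zero.mp h'').resolve_right hc
        exact ⟨c, hc, Or.inr (by simp [hb])⟩
    · exfalso
      have hD : (1 + α) * a ^ 2 + 2 * α * (b * c) = 0 := by
        by_contra hD
        have hc0 : c = 0 := (mul_eq_zero.mp hDc).resolve_right hD
        have hb0 : b = 0 := (mul_eq_zero.mp hDb).resolve_right hD
        have : (2 : K) * (2 * (a * a * a)) = 0 := by
          rw [hb0, hc0] at e1; linear_combination e1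
        rcases mul_eq_zero.mp this with h' | h'
        · exact h2 h'
        · rcases mul_eq_zero.mp h' with h'' | h''
          · exact h2 h''
          · exact ha (by
              rcases mul_eq_zero.mp h'' with h3 | h3
              · exact (mul_eq_zero.mp h3).elim id id
              · exact h3)
      have hE : (1 + α) * (b * c) + 2 * a ^ 2 = 0 := by
        rcases mul_eq_zero.mp e1 with h' | h'
        · rcases mul_eq_zero.mp h' with h'' | h''
          · exact absurd h'' h2
          · exact absurd h'' ha
        · linear_combination h'
      have key : (1 - α) ^ 2 * a ^ 2 = 0 := by
        linear_combination (1 + α) * hD - 2 * α * hE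
      rcases mul_eq_zero.mp key with h' | h'
      · exact hα1 ((sub_eq_zero.mp (pow_eq_zero_iff (n := 2) (by norm_num) |>.mp h')).symm)
      · exact ha (pow_eq_zero_iff (n := 2) (by norm_num) |>.mp h')
  · rintro ⟨t, ht, h' | h'⟩ <;>
      · simp only [Prod.mk.injEq] at h'
        obtain ⟨ha, hb, hc⟩ := h'
        subst ha; subst hb; subst hc
        refine ⟨by ring, by ring, by ring⟩
end

section
/- Over an algebraically closed field of characteristic 0, the quartic F = x²z² + 2y²xz + y⁴ − y·x³ has exactly one singular point, namely (0:0:1). -/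
/-!
Write `q = xz + y²`. Then `F = q² − yx³` and `∂F/∂z = 2xq`. If `x ≠ 0` at a singular point,
`∂F/∂z = 0` forces `q = 0`, then `F = 0` forces `y = 0`, so `xz = 0` gives `z = 0` and
`∂F/∂y = −x³ ≠ 0`, a contradiction. Hence `x = 0`, and then `∂F/∂y = 4y³` forces `y = 0`.
-/

namespace A6Quartic

variable {K : Type*} [Field K] {a b c : K}

theorem a_eq_zero_of_singular (h2 : (2 : K) ≠ 0)
    (hF : a ^ 2 * c ^ 2 + 2 * b ^ 2 * a * c + b ^ 4 - b * a ^ 3 = 0)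
    (hFy : 4 * b * a * c + 4 * b ^ 3 - a ^ 3 = 0)
    (hFz : 2 * a ^ 2 * c + 2 * b ^ 2 * a = 0) : a = 0 := by
  by_contra ha
  have hq : a * c + b ^ 2 = 0 := by
    have : (2 * a) * (a * c + b ^ 2) = 0 := by linear_combination hFz
    exact (mul_eq_zero.mp this).resolve_left (mul_ne_zero h2 ha)
  have hb : b = 0 := by
    have : b * a ^ 3 = 0 := by linear_combination (a * c + b ^ 2) * hq - hF
    exact (mul_eq_zero.mp this).resolve_right (pow_ne_zero 3 ha)
  have hc : c = 0 := by
    have : a * c = 0 := by linear_combination hq - b * hb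
    exact (mul_eq_zero.mp this).resolve_left ha
  subst hb hc
  exact pow_ne_zero 3 ha (by linear_combination -hFy)

theorem b_eq_zero_of_singular (h2 : (2 : K) ≠ 0) (ha : a = 0)
    (hFy : 4 * b * a * c + 4 * b ^ 3 - a ^ 3 = 0) : b = 0 := by
  subst ha
  have : (2 * 2) * b ^ 3 = 0 := by linear_combination hFy
  simpa [h2] using this

end A6Quartic

open A6Quartic in
theorem quartic_A6_singular_point_general
    (K : Type*) [Field K] [CharZero K]
    (a b c : K) (h : (a, b, c) ≠ (0, 0, 0)) :
    (a ^ 2 * c ^ 2 + 2 * b ^ 2 * a * c + b ^ 4 - b * a ^ 3 = 0 ∧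
     2 * a * c ^ 2 + 2 * b ^ 2 * c - 3 * b * a ^ 2 = 0 ∧
     4 * b * a * c + 4 * b ^ 3 - a ^ 3 = 0 ∧
     2 * a ^ 2 * c + 2 * b ^ 2 * a = 0) ↔
    ∃ t : K, t ≠ 0 ∧ (a, b, c) = (0, 0, t) := by
  constructor
  · rintro ⟨hF, -, hFy, hFz⟩
    have ha := a_eq_zero_of_singular two_ne_zero hF hFy hFz
    have hb := b_eq_zero_of_singular two_ne_zero ha hFy
    subst ha hb
    exact ⟨c, fun hc => h (by rw [hc]), rfl⟩
  · rintro ⟨t, -, heq⟩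
    obtain ⟨rfl, rfl, rfl⟩ : a = 0 ∧ b = 0 ∧ c = t := by simpa [Prod.ext_iff] using heq
    norm_num

/-- The quartic F = x²z² + 2y²xz + y⁴ − yx³ (Hui normal form for A₆) over an
algebraically closed field of characteristic 0 has exactly one singular
point, namely (0:0:1).  Partials: ∂F/∂x = 2xz² + 2y²z − 3yx²,
∂F/∂y = 4yxz + 4y³ − x³, ∂F/∂z = 2x²z + 2y²x. -/
theorem quartic_A6_singular_point
    (K : Type*) [Field K] [IsAlgClosed K] [CharZero K]
    (a b c : K) (h : (a, b, c) ≠ (0, 0, 0)) :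
    (a ^ 2 * c ^ 2 + 2 * b ^ 2 * a * c + b ^ 4 - b * a ^ 3 = 0 ∧
     2 * a * c ^ 2 + 2 * b ^ 2 * c - 3 * b * a ^ 2 = 0 ∧
     4 * b * a * c + 4 * b ^ 3 - a ^ 3 = 0 ∧
     2 * a ^ 2 * c + 2 * b ^ 2 * a = 0) ↔
    ∃ t : K, t ≠ 0 ∧ (a, b, c) = (0, 0, t) :=
  quartic_A6_singular_point_general K a b c h
end
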